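/- arXiv:1108.5711 — 4 statements merged into one kernel-verified Lean document; each statement's English description precedes it below -/
import Mathlib

section
/- Let (λ, μ, ν) be an ℕ-representation such that λ·μ(w)·ν ∈ {0,1} for all words w, recognizing the characteristic series of L ⊆ A*. Then for every word u ∈ A* and letter a ∈ A: λ·μ(P(u·a))·ν = λ·ν + λ·μ(u)·σ_a·ν + λ·μ(P(u))·σ·ν, where σ = Σ_{b∈A} μ(b), σ_a = Σ_{b<a} μ(b), and μ(P(u)) = Σ_{v≺u} μ(v). -/
/-!
A nonempty word below `u·a` in the radix order is `w·b` with either `w ≺ u` and `b`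
arbitrary, or `w = u` and `b < a`. Since `μ (w·b) = μ w * μ b`, summing `μ` over these
two blocks, plus `μ [] = 1` for the empty word, gives `1 + μ(u)·σ_a + μ(P(u))·σ`.
-/

open Matrix

def radixLt {A : Type*} [LinearOrder A] (u v : List A) : Prop :=
  u.length < v.length ∨ (u.length = v.length ∧ List.Lex (· < ·) u v)

theorem List.lex_append_singleton_iff {α : Type*} {r : α → α → Prop} {b c : α} :
    ∀ {w u : List α}, w.length = u.length →
      (Lex r (w ++ [b]) (u ++ [c]) ↔ Lex r w u ∨ (w = u ∧ r b c))
  | [], [], _ => by simp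
  | x :: w, y :: u, h => by
    simp only [cons_append, cons_lex_cons_iff,
      lex_append_singleton_iff (Nat.succ.inj h), cons.injEq]
    tauto

section Radix

variable {A : Type*} [LinearOrder A]

theorem radixLt_irrefl (u : List A) : ¬radixLt u u := by
  rintro (h | ⟨-, h⟩)
  · exact lt_irrefl _ h
  · exact List.lex_irrefl lt_irrefl u h

theorem radixLt_nil_append_singleton (u : List A) (a : A) : radixLt [] (u ++ [a]) :=
  Or.inl (by simp)

theorem radixLt_append_singleton_iff {u w : List A} {a b : A} :
    radixLt (w ++ [b]) (u ++ [a]) ↔ radixLt w u ∨ (w = u ∧ b < a) := by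
  simp only [radixLt, List.length_append, List.length_singleton, Nat.add_right_cancel_iff,
    Nat.add_lt_add_iff_right]
  constructor
  · rintro (h | ⟨h, hlex⟩)
    · exact Or.inl (Or.inl h)
    · rw [List.lex_append_singleton_iff h] at hlex
      tauto
  · rintro ((h | ⟨h, hlex⟩) | ⟨rfl, h⟩)
    · exact Or.inl h
    · exact Or.inr ⟨h, (List.lex_append_singleton_iff h).2 (Or.inl hlex)⟩
    · exact Or.inr ⟨rfl, (List.lex_append_singleton_iff rfl).2 (Or.inr ⟨rfl, h⟩)⟩

variable [Fintype A]

theorem radixLt_append_singleton_toFinset {u : List A} {a : A}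
    (hua : {v | radixLt v (u ++ [a])}.Finite) (hu : {v | radixLt v u}.Finite) :
    hua.toFinset = insert []
      ((hu.toFinset ×ˢ Finset.univ ∪ {u} ×ˢ Finset.univ.filter (· < a)).image
        fun p => p.1 ++ [p.2]) := by
  ext v
  rcases v.eq_nil_or_concat' with rfl | ⟨w, b, rfl⟩
  · simp [radixLt_nil_append_singleton]
  · simp [radixLt_append_singleton_iff]
    tauto

theorem sum_radixLt_append_singleton {R : Type*} [Semiring R] (μ : List A → R) (hμ1 : μ [] = 1)
    (hμm : ∀ u v, μ (u ++ v) = μ u * μ v)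
    {u : List A} {a : A} (hua : {v | radixLt v (u ++ [a])}.Finite)
    (hu : {v | radixLt v u}.Finite) :
    ∑ v ∈ hua.toFinset, μ v =
      1 + μ u * ∑ b ∈ Finset.univ.filter (· < a), μ [b]
        + (∑ v ∈ hu.toFinset, μ v) * ∑ b : A, μ [b] := by
  have hdisj : Disjoint (hu.toFinset ×ˢ Finset.univ) ({u} ×ˢ Finset.univ.filter (· < a)) := by
    simp only [Finset.disjoint_left, Finset.mem_product, Set.Finite.mem_toFinset,
      Set.mem_ofPred_eq, Finset.mem_singleton]
    rintro ⟨w, b⟩ ⟨hw, -⟩ ⟨rfl, -⟩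
    exact radixLt_irrefl _ hw
  have hinj : Function.Injective fun p : List A × A => p.1 ++ [p.2] := by
    rintro ⟨w, b⟩ ⟨w', b'⟩ h
    simpa using List.append_inj' h rfl
  rw [radixLt_append_singleton_toFinset hua hu, Finset.sum_insert (by simp),
    Finset.sum_image fun p _ q _ h => hinj h, Finset.sum_union hdisj, Finset.sum_product,
    Finset.sum_product, Finset.sum_singleton, hμ1, Finset.sum_mul_sum, Finset.mul_sum, add_assoc,
    add_comm (∑ w ∈ hu.toFinset, _)]
  simp only [hμm]

end Radix

theorem rep_initial_segment_recurrence_general {A : Type*} [Fintype A] [LinearOrder A]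
    (k : ℕ) (μ : List A → Matrix (Fin k) (Fin k) ℕ)
    (hμ1 : μ [] = 1) (hμm : ∀ u v : List A, μ (u ++ v) = μ u * μ v)
    (lam ν : Fin k → ℕ)
    (hfin : ∀ u : List A, {v | radixLt v u}.Finite)
    (u : List A) (a : A) :
    lam ⬝ᵥ ((∑ v ∈ (hfin (u ++ [a])).toFinset, μ v) *ᵥ ν) =
      lam ⬝ᵥ ν
      + lam ⬝ᵥ ((μ u * ∑ b ∈ Finset.univ.filter (· < a), μ [b]) *ᵥ ν)
      + lam ⬝ᵥ (((∑ v ∈ (hfin u).toFinset, μ v) * ∑ b : A, μ [b]) *ᵥ ν) := by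
  rw [sum_radixLt_append_singleton μ hμ1 hμm, add_mulVec, add_mulVec, one_mulVec,
    dotProduct_add, dotProduct_add]

/-- Key recurrence for the representation applied to initial segments of the
radix order: `λ·μ(P(u·a))·ν = λ·ν + λ·μ(u)·σ_a·ν + λ·μ(P(u))·σ·ν`. -/
theorem rep_initial_segment_recurrence {A : Type*} [Fintype A] [LinearOrder A]
    (k : ℕ) (μ : List A → Matrix (Fin k) (Fin k) ℕ)
    (hμ1 : μ [] = 1) (hμm : ∀ u v : List A, μ (u ++ v) = μ u * μ v)
    (lam ν : Fin k → ℕ) (L : Set (List A)) [DecidablePred (· ∈ L)]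
    (hchar : ∀ w : List A, lam ⬝ᵥ (μ w *ᵥ ν) = if w ∈ L then 1 else 0)
    (hfin : ∀ u : List A, {v | radixLt v u}.Finite)
    (u : List A) (a : A) :
    lam ⬝ᵥ ((∑ v ∈ (hfin (u ++ [a])).toFinset, μ v) *ᵥ ν) =
      lam ⬝ᵥ ν
      + lam ⬝ᵥ ((μ u * ∑ b ∈ Finset.univ.filter (· < a), μ [b]) *ᵥ ν)
      + lam ⬝ᵥ (((∑ v ∈ (hfin u).toFinset, μ v) * ∑ b : A, μ [b]) *ᵥ ν) :=
  rep_initial_segment_recurrence_general k μ hμ1 hμm lam ν hfin u a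
end

section
/- The enumerating series of a rational abstract numeration system is an ℕ-rational (equivalently, ℕ-recognizable) series: if L ⊆ A* is a rational infinite language, then there exists an ℕ-representation (η, κ, ξ) such that for every w ∈ L, η·κ(w)·ξ = val_L(w) + 1, and η·κ(w)·ξ = 0 for w ∉ L. -/
open Matrix

/-- The value of a word `w` in the abstract numeration system given by `L`. -/
noncomputable def ansVal {A : Type*} [LinearOrder A] (L : Set (List A)) (w : List A) : ℕ :=
  {v ∈ L | radixLt v w}.ncard

open Kronecker Finset

/-!
Fix a DFA for `L` with transition matrices `μ a`, and put `κ w = μ w₁ ⋯ μ wₙ`, `T = ∑ a, μ a`.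
Then `val_L w + [w ∈ L]` counts the accepted words `v ≼ w`, so it is the (start, final) entry sum
of `∑_{v ≼ w} κ v = ∑_{k < |w|} T ^ k + ∑_{|v| = |w|, v <lex w} κ v + κ w`.
When a letter is prepended to `w`, the vector `(κ w, lex sum, geometric sum, T ^ |w|)` transforms
by a `4 × 4` block matrix over the matrix ring, which flattens to an `ℕ`-representation. The
enumerating series is the Hadamard product of this series with the characteristic series of `L`,
and Kronecker products show that Hadamard products of recognizable series are recognizable.
-/

namespace Matrix

variable {A : Type*}

theorem eq_list_prod_map_mulVec_of_cons {R m : Type*} [Semiring R] [Fintype m] [DecidableEq m]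
    (B : A → Matrix m m R) (V : List A → m → R) (hV : ∀ a w, V (a :: w) = B a *ᵥ V w)
    (w : List A) : V w = (w.map B).prod *ᵥ V [] := by
  induction w with
  | nil => simp
  | cons a w ih => rw [hV, ih, List.map_cons, List.prod_cons, mulVec_mulVec]

theorem list_prod_map_kronecker {R ι κ : Type*} [CommSemiring R] [Fintype ι] [DecidableEq ι]
    [Fintype κ] [DecidableEq κ] (μ : A → Matrix ι ι R) (ν : A → Matrix κ κ R) (w : List A) :
    (w.map fun a => μ a ⊗ₖ ν a).prod = (w.map μ).prod ⊗ₖ (w.map ν).prod := by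
  induction w with
  | nil => simp
  | cons a w ih => simp [ih, mul_kronecker_mul]

theorem dotProduct_kronecker_mulVec {R ι κ : Type*} [CommSemiring R] [Fintype ι] [Fintype κ]
    (P : Matrix ι ι R) (Q : Matrix κ κ R) (x y : ι → R) (x' y' : κ → R) :
    (fun p : ι × κ => x p.1 * x' p.2) ⬝ᵥ ((P ⊗ₖ Q) *ᵥ fun p => y p.1 * y' p.2) =
      (x ⬝ᵥ (P *ᵥ y)) * (x' ⬝ᵥ (Q *ᵥ y')) := by
  simp only [dotProduct, mulVec, kroneckerMap_apply, Fintype.sum_prod_type]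
  rw [sum_mul_sum]
  refine Fintype.sum_congr _ _ fun i => Fintype.sum_congr _ _ fun k => ?_
  simp only [mul_sum, sum_mul]
  rw [sum_comm]
  exact Fintype.sum_congr _ _ fun j => Fintype.sum_congr _ _ fun l => by ring

theorem dotProduct_comp_mulVec {m ι R : Type*} [Fintype m] [Fintype ι] [CommSemiring R]
    (P : Matrix m m (Matrix ι ι R)) (u v : m → Matrix ι ι R) (x y : ι → R) :
    x ⬝ᵥ ((u ⬝ᵥ (P *ᵥ v)) *ᵥ y) =
      (fun p : m × ι => (x ᵥ* u p.1) p.2) ⬝ᵥ (comp m m ι ι R P *ᵥ fun p => (v p.1 *ᵥ y) p.2) := by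
  calc x ⬝ᵥ ((u ⬝ᵥ (P *ᵥ v)) *ᵥ y)
      = ∑ i, ∑ j, (x ᵥ* u i) ⬝ᵥ (P i j *ᵥ (v j *ᵥ y)) := by
        have : u ⬝ᵥ (P *ᵥ v) = ∑ i, ∑ j, u i * (P i j * v j) := by
          simp only [dotProduct, mulVec, mul_sum]
        simp only [this, sum_mulVec, dotProduct_sum, ← mulVec_mulVec, dotProduct_mulVec]
    _ = _ := by
        simp only [dotProduct, mulVec, Fintype.sum_prod_type, comp_apply, mul_sum]
        exact Fintype.sum_congr _ _ fun i => sum_comm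

end Matrix

def IsNRecognizable {A : Type*} (s : List A → ℕ) : Prop :=
  ∃ (n : ℕ) (μ : A → Matrix (Fin n) (Fin n) ℕ) (η ξ : Fin n → ℕ),
    ∀ w, η ⬝ᵥ ((w.map μ).prod *ᵥ ξ) = s w

namespace IsNRecognizable

variable {A : Type*}

theorem of_fintype {ι : Type*} [Fintype ι] [DecidableEq ι] (μ : A → Matrix ι ι ℕ)
    (η ξ : ι → ℕ) : IsNRecognizable fun w => η ⬝ᵥ ((w.map μ).prod *ᵥ ξ) := by
  let e := Fintype.equivFin ι
  refine ⟨Fintype.card ι, reindexAlgEquiv ℕ ℕ e ∘ μ, η ∘ e.symm, ξ ∘ e.symm, fun w => ?_⟩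
  rw [← List.map_map, ← map_list_prod]
  simp [coe_reindexAlgEquiv, reindex_apply, submatrix_mulVec_equiv, dotProduct_comp_equiv_symm,
    Function.comp_assoc]

theorem mul {s t : List A → ℕ} (hs : IsNRecognizable s) (ht : IsNRecognizable t) :
    IsNRecognizable fun w => s w * t w := by
  obtain ⟨m, μ, η, ξ, hs⟩ := hs
  obtain ⟨n, ν, η', ξ', ht⟩ := ht
  convert of_fintype (fun a => μ a ⊗ₖ ν a) (fun p => η p.1 * η' p.2) (fun p => ξ p.1 * ξ' p.2)
    using 2 with w
  rw [list_prod_map_kronecker, dotProduct_kronecker_mulVec, hs, ht]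

theorem of_block {m ι : Type*} [Fintype m] [DecidableEq m] [Fintype ι] [DecidableEq ι]
    (B : A → Matrix m m (Matrix ι ι ℕ)) (u v : m → Matrix ι ι ℕ) (x y : ι → ℕ) :
    IsNRecognizable fun w => x ⬝ᵥ ((u ⬝ᵥ ((w.map B).prod *ᵥ v)) *ᵥ y) := by
  convert of_fintype (compRingEquiv m ι ℕ ∘ B) (fun p => (x ᵥ* u p.1) p.2)
    (fun p => (v p.1 *ᵥ y) p.2) using 2 with w
  rw [← List.map_map, ← map_list_prod, compRingEquiv_apply, dotProduct_comp_mulVec]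

end IsNRecognizable

def wordsOfLength (A : Type*) [Fintype A] [DecidableEq A] : ℕ → Finset (List A)
  | 0 => {[]}
  | n + 1 => (univ ×ˢ wordsOfLength A n).image fun p => p.1 :: p.2

section Words

variable {A : Type*} [Fintype A] [DecidableEq A]

@[simp]
theorem mem_wordsOfLength {n : ℕ} {v : List A} : v ∈ wordsOfLength A n ↔ v.length = n := by
  induction n generalizing v with
  | zero => simp [wordsOfLength]
  | succ n ih => cases v <;> simp [wordsOfLength, ih]

theorem sum_wordsOfLength_succ {M : Type*} [AddCommMonoid M] (n : ℕ) (g : List A → M) :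
    ∑ v ∈ wordsOfLength A (n + 1), g v = ∑ a, ∑ v ∈ wordsOfLength A n, g (a :: v) := by
  rw [wordsOfLength, sum_image fun p _ q _ h => by simpa [Prod.ext_iff] using h, sum_product]

variable {R : Type*} [Semiring R] (μ : A → R)

theorem sum_wordsOfLength_prod_map (n : ℕ) :
    ∑ v ∈ wordsOfLength A n, (v.map μ).prod = (∑ a, μ a) ^ n := by
  induction n with
  | zero => simp [wordsOfLength]
  | succ n ih =>
    simp only [sum_wordsOfLength_succ, List.map_cons, List.prod_cons, ← mul_sum, ih, sum_mul,
      pow_succ']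

end Words

section Radix

variable {A : Type*} [Fintype A] [LinearOrder A] {R : Type*} [Semiring R] (μ : A → R)

def lexSum (w : List A) : R :=
  ∑ v ∈ wordsOfLength A w.length with v < w, (v.map μ).prod

theorem lexSum_cons (a : A) (w : List A) :
    lexSum μ (a :: w) = (∑ b with b < a, μ b) * (∑ b, μ b) ^ w.length + μ a * lexSum μ w := by
  have hb : ∀ b, ∑ v ∈ wordsOfLength A w.length with b :: v < a :: w, ((b :: v).map μ).prod =
      (if b < a then μ b * (∑ b, μ b) ^ w.length else 0) +
        if b = a then μ a * lexSum μ w else 0 := by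
    intro b
    rcases lt_trichotomy b a with hba | rfl | hab
    · simp [List.cons_lt_cons_iff, hba, hba.ne, ← mul_sum, sum_wordsOfLength_prod_map]
    · simp [lexSum, mul_sum]
    · simp [List.cons_lt_cons_iff, hab.not_gt, hab.ne']
  calc lexSum μ (a :: w)
      = ∑ b, ∑ v ∈ wordsOfLength A w.length with b :: v < a :: w, ((b :: v).map μ).prod := by
        simp only [lexSum, List.length_cons, sum_filter, sum_wordsOfLength_succ]
    _ = _ := by
        simp only [hb, sum_add_distrib, sum_ite_eq', mem_univ, if_true, ← sum_filter, sum_mul]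

def radixVec (w : List A) : Fin 4 → R :=
  ![(w.map μ).prod, lexSum μ w, ∑ k ∈ range w.length, (∑ a, μ a) ^ k, (∑ a, μ a) ^ w.length]

def radixMat (a : A) : Matrix (Fin 4) (Fin 4) R :=
  !![μ a, 0, 0, 0; 0, μ a, 0, ∑ b with b < a, μ b; 0, 0, 1, 1; 0, 0, 0, ∑ b, μ b]

theorem radixVec_cons (a : A) (w : List A) :
    radixVec μ (a :: w) = radixMat μ a *ᵥ radixVec μ w := by
  ext i
  fin_cases i <;> simp [radixVec, radixMat, mulVec, dotProduct, Fin.sum_univ_four, lexSum_cons,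
    geom_sum_succ', pow_succ', add_comm]

def radixBelow (w : List A) : Finset (List A) :=
  (range w.length).biUnion (wordsOfLength A) ∪ {v ∈ wordsOfLength A w.length | v < w}

@[simp]
theorem mem_radixBelow {v w : List A} : v ∈ radixBelow w ↔ radixLt v w := by
  simp [radixBelow, radixLt, List.lex_lt]

theorem sum_radixBelow_prod_map_add (w : List A) :
    ∑ v ∈ radixBelow w, (v.map μ).prod + (w.map μ).prod = ![1, 1, 1, 0] ⬝ᵥ radixVec μ w := by
  rw [radixBelow, sum_union, sum_biUnion]
  · simp only [sum_wordsOfLength_prod_map, dotProduct, radixVec, lexSum, Fin.sum_univ_four,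
      cons_val_zero, cons_val_one, Matrix.cons_val, one_mul, zero_mul, add_zero]
    abel
  · intro i _ j _ hij
    exact disjoint_left.2 fun v hi hj =>
      hij ((mem_wordsOfLength.1 hi).symm.trans (mem_wordsOfLength.1 hj))
  · refine disjoint_left.2 fun v hv hv' => ?_
    simp only [mem_biUnion, mem_range, mem_wordsOfLength, mem_filter] at hv hv'
    omega

theorem ansVal_eq_sum_indicator (L : Set (List A)) (w : List A) :
    ansVal L w = ∑ v ∈ radixBelow w, L.indicator 1 v := by
  classical
  have : {v ∈ L | radixLt v w} = ↑({v ∈ radixBelow w | v ∈ L}) := by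
    ext v
    simp [and_comm]
  rw [ansVal, this, Set.ncard_coe_finset, card_filter]
  simp [Set.indicator_apply]

end Radix

namespace DFA

variable {A : Type*} {σ : Type*} [Fintype σ] [DecidableEq σ] (M : DFA A σ)

def stepMatrix (a : A) : Matrix σ σ ℕ := of fun p q => if M.step p a = q then 1 else 0

theorem list_prod_map_stepMatrix_apply (w : List A) (p q : σ) :
    (w.map M.stepMatrix).prod p q = if M.evalFrom p w = q then 1 else 0 := by
  induction w generalizing p with
  | nil => exact one_apply
  | cons a w ih =>
    simp only [List.map_cons, List.prod_cons, mul_apply, ih, stepMatrix, of_apply, ite_mul,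
      one_mul, zero_mul, sum_ite_eq, mem_univ, if_true, evalFrom_cons]
    rfl

theorem indicator_accepts (w : List A) :
    Set.indicator M.accepts 1 w =
      Pi.single M.start 1 ⬝ᵥ ((w.map M.stepMatrix).prod *ᵥ M.accept.indicator 1) := by
  rw [single_one_dotProduct]
  simp only [mulVec, dotProduct, list_prod_map_stepMatrix_apply, ite_mul, one_mul, zero_mul,
    sum_ite_eq, mem_univ, if_true]
  exact Set.indicator_comp_right (g := (1 : σ → ℕ)) (M.evalFrom M.start)

theorem isNRecognizable_indicator_accepts :
    IsNRecognizable (Set.indicator M.accepts 1) := by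
  convert IsNRecognizable.of_fintype M.stepMatrix (Pi.single M.start 1) (M.accept.indicator 1)
  exact indicator_accepts M _

end DFA

theorem DFA.isNRecognizable_ansVal_add_indicator {A : Type*} [Fintype A] [LinearOrder A]
    {σ : Type*} [Fintype σ] [DecidableEq σ] (M : DFA A σ) :
    IsNRecognizable fun w => ansVal M.accepts w + Set.indicator M.accepts 1 w := by
  convert IsNRecognizable.of_block (radixMat M.stepMatrix) ![1, 1, 1, 0]
    (radixVec M.stepMatrix []) (Pi.single M.start 1) (M.accept.indicator 1) using 2 with w
  rw [← eq_list_prod_map_mulVec_of_cons _ _ (radixVec_cons _), ← sum_radixBelow_prod_map_add,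
    ansVal_eq_sum_indicator M.accepts, add_mulVec, sum_mulVec, dotProduct_add, dotProduct_sum]
  simp only [indicator_accepts]

theorem enumerating_series_is_N_rational_general {A : Type*} [Fintype A] [LinearOrder A]
    (L : Language A) (hreg : L.IsRegular) :
    ∃ (n : ℕ) (κ : List A → Matrix (Fin n) (Fin n) ℕ) (η ξ : Fin n → ℕ),
      κ [] = 1 ∧ (∀ u v : List A, κ (u ++ v) = κ u * κ v) ∧
      (∀ w ∈ L, η ⬝ᵥ (κ w *ᵥ ξ) = ansVal L w + 1) ∧
      (∀ w ∉ L, η ⬝ᵥ (κ w *ᵥ ξ) = 0) := by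
  obtain ⟨σ, _, M, rfl⟩ := hreg
  classical
  obtain ⟨n, μ, η, ξ, h⟩ :=
    M.isNRecognizable_indicator_accepts.mul M.isNRecognizable_ansVal_add_indicator
  refine ⟨n, fun w => (w.map μ).prod, η, ξ, rfl, fun u v => by simp, fun w hw => ?_,
    fun w hw => ?_⟩
  · simp [h, Set.indicator_of_mem hw]
  · simp [h, Set.indicator_of_notMem hw]

/-- The enumerating series of a rational abstract numeration system is
`ℕ`-recognizable: there is an `ℕ`-representation `(η, κ, ξ)` whose value on a
word `w` is `val_L(w) + 1` if `w ∈ L` and `0` otherwise. -/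
theorem enumerating_series_is_N_rational {A : Type*} [Fintype A] [LinearOrder A]
    (L : Language A) (hreg : L.IsRegular) (hinf : (L : Set (List A)).Infinite) :
    ∃ (n : ℕ) (κ : List A → Matrix (Fin n) (Fin n) ℕ) (η ξ : Fin n → ℕ),
      κ [] = 1 ∧ (∀ u v : List A, κ (u ++ v) = κ u * κ v) ∧
      (∀ w ∈ L, η ⬝ᵥ (κ w *ᵥ ξ) = ansVal L w + 1) ∧
      (∀ w ∉ L, η ⬝ᵥ (κ w *ᵥ ξ) = 0) :=
  enumerating_series_is_N_rational_general L hreg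
end

section
/- If s: A* → ℕ is an ℕ-recognizable series and X ⊆ ℕ is an eventually periodic (recognizable) set of natural numbers, then s⁻¹(X) = {w ∈ A* : s(w) ∈ X} is a rational (regular) language. -/
/-!
Call two natural numbers equivalent if they are equal, or both are at least `N` and congruent
modulo `p`. This is a congruence of the semiring `ℕ` with finitely many classes, and `X` is a
union of classes. Reducing the entries of `μ` modulo it gives a morphism from `A*` into a finite
monoid of matrices through which `s⁻¹(X)` factors, so `s⁻¹(X)` has finitely many left quotients
and is regular by Myhill–Nerode.
-/

open Matrix

theorem Language.isRegular_of_map_append_eq_mul {α M : Type*} [Mul M] [Finite M]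
    (φ : List α → M) (hφ : ∀ u v, φ (u ++ v) = φ u * φ v) (P : Set M) :
    Language.IsRegular ({w | φ w ∈ P} : Language α) := by
  refine .of_finite_range_leftQuotient <|
    (Set.finite_range fun m : M => ({y | m * φ y ∈ P} : Language α)).subset ?_
  rintro _ ⟨x, rfl⟩
  refine ⟨φ x, ?_⟩
  ext y
  change φ x * φ y ∈ P ↔ φ (x ++ y) ∈ P
  rw [hφ]

namespace Nat

def ThresholdPeriodRel (N p x y : ℕ) : Prop :=
  x = y ∨ N ≤ x ∧ N ≤ y ∧ x ≡ y [MOD p]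

namespace ThresholdPeriodRel

variable {N p x y z : ℕ}

theorem refl (x : ℕ) : ThresholdPeriodRel N p x x := .inl rfl

theorem symm : ThresholdPeriodRel N p x y → ThresholdPeriodRel N p y x
  | .inl h => .inl h.symm
  | .inr ⟨hx, hy, h⟩ => .inr ⟨hy, hx, h.symm⟩

theorem trans :
    ThresholdPeriodRel N p x y → ThresholdPeriodRel N p y z → ThresholdPeriodRel N p x z
  | .inl rfl, h => h
  | h, .inl rfl => h
  | .inr ⟨hx, _, hxy⟩, .inr ⟨_, hz, hyz⟩ => .inr ⟨hx, hz, hxy.trans hyz⟩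

theorem add_right (h : ThresholdPeriodRel N p x y) (z : ℕ) :
    ThresholdPeriodRel N p (x + z) (y + z) := by
  rcases h with rfl | ⟨hx, hy, hxy⟩
  · exact refl _
  · exact .inr ⟨by omega, by omega, hxy.add_right z⟩

theorem mul_right (h : ThresholdPeriodRel N p x y) (z : ℕ) :
    ThresholdPeriodRel N p (x * z) (y * z) := by
  rcases h with rfl | ⟨hx, hy, hxy⟩
  · exact refl _
  rcases Nat.eq_zero_or_pos z with rfl | hz
  · exact refl _
  · exact .inr ⟨hx.trans (Nat.le_mul_of_pos_right x hz),
      hy.trans (Nat.le_mul_of_pos_right y hz), hxy.mul_right z⟩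

theorem exists_lt (hp : 0 < p) (x : ℕ) : ∃ y < N + p, ThresholdPeriodRel N p y x := by
  by_cases hx : x < N
  · exact ⟨x, by omega, refl x⟩
  have hmod := ((x - N).mod_modEq p).add_left N
  rw [Nat.add_sub_cancel' (by omega)] at hmod
  exact ⟨_, Nat.add_lt_add_left (Nat.mod_lt _ hp) N, .inr ⟨by omega, by omega, hmod⟩⟩

theorem mem_iff {X : Set ℕ} (hX : ∀ m ≥ N, (m ∈ X ↔ m + p ∈ X))
    (h : ThresholdPeriodRel N p x y) : x ∈ X ↔ y ∈ X := by
  have mem_add_mul : ∀ k, ∀ m ≥ N, (m ∈ X ↔ m + p * k ∈ X) := by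
    intro k
    induction k with
    | zero => simp
    | succ k ih =>
      intro m hm
      rw [Nat.mul_succ, ← Nat.add_assoc]
      exact (ih m hm).trans (hX _ (by omega))
  rcases h with rfl | ⟨hx, hy, hxy⟩
  · rfl
  wlog hle : x ≤ y generalizing x y
  · exact (this hy hx hxy.symm (by omega)).symm
  obtain ⟨k, hk⟩ := (Nat.modEq_iff_dvd' hle).mp hxy
  rw [show y = x + p * k by omega]
  exact mem_add_mul k x hx

end ThresholdPeriodRel

def thresholdPeriodCon (N p : ℕ) : RingCon ℕ where
  r := ThresholdPeriodRel N p
  iseqv := ⟨.refl, .symm, .trans⟩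
  add' {w x y z} h₁ h₂ := by
    have h₂' := h₂.add_right x
    rw [Nat.add_comm y, Nat.add_comm z] at h₂'
    exact (h₁.add_right y).trans h₂'
  mul' {w x y z} h₁ h₂ := by
    have h₂' := h₂.mul_right x
    rw [Nat.mul_comm y, Nat.mul_comm z] at h₂'
    exact (h₁.mul_right y).trans h₂'

theorem finite_thresholdPeriodCon_quotient {N p : ℕ} (hp : 0 < p) :
    Finite (thresholdPeriodCon N p).Quotient := by
  refine Finite.of_surjective
    (fun y : Fin (N + p) => ((y : ℕ) : (thresholdPeriodCon N p).Quotient)) ?_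
  intro q
  induction q using Quotient.inductionOn' with
  | h x =>
    obtain ⟨y, hy, hyx⟩ := ThresholdPeriodRel.exists_lt hp x
    exact ⟨⟨y, hy⟩, (RingCon.eq _).mpr hyx⟩

end Nat

theorem preimage_of_recognizable_set_regular_general {A : Type*}
    (s : List A → ℕ) (n : ℕ) (μ : List A → Matrix (Fin n) (Fin n) ℕ)
    (hμm : ∀ u v : List A, μ (u ++ v) = μ u * μ v)
    (lam ν : Fin n → ℕ) (hs : ∀ w : List A, s w = lam ⬝ᵥ (μ w *ᵥ ν))
    (X : Set ℕ) (N p : ℕ) (hp : 0 < p)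
    (hX : ∀ m ≥ N, (m ∈ X ↔ m + p ∈ X)) :
    Language.IsRegular {w : List A | s w ∈ X} := by
  have := Nat.finite_thresholdPeriodCon_quotient (N := N) hp
  let f : ℕ →+* (Nat.thresholdPeriodCon N p).Quotient := RingCon.mk' _
  have mem_image_iff (m : ℕ) : f m ∈ f '' X ↔ m ∈ X :=
    ⟨fun ⟨k, hk, hkm⟩ => (Nat.ThresholdPeriodRel.mem_iff hX ((RingCon.eq _).mp hkm)).mp hk,
      fun hm => ⟨m, hm, rfl⟩⟩
  have map_s (w : List A) : f (s w) = (f ∘ lam) ⬝ᵥ ((μ w).map f *ᵥ (f ∘ ν)) := by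
    rw [hs, RingHom.map_dotProduct]
    congr 1
    ext i
    exact RingHom.map_mulVec f _ _ i
  have preimage_eq : ({w | s w ∈ X} : Language A) =
      {w | (μ w).map f ∈ {M | (f ∘ lam) ⬝ᵥ (M *ᵥ (f ∘ ν)) ∈ f '' X}} := by
    ext w
    simp only [Set.mem_ofPred_eq, ← map_s, mem_image_iff]
  rw [preimage_eq]
  exact Language.isRegular_of_map_append_eq_mul _
    (fun u v => by simp only [hμm, Matrix.map_mul]) _

/-- If `s` is an `ℕ`-recognizable series over `A*` and `X ⊆ ℕ` is an eventually
periodic (recognizable) set of natural numbers, then `s⁻¹(X)` is a regular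
language. -/
theorem preimage_of_recognizable_set_regular {A : Type*} [Fintype A]
    (s : List A → ℕ) (n : ℕ) (μ : List A → Matrix (Fin n) (Fin n) ℕ)
    (hμ1 : μ [] = 1) (hμm : ∀ u v : List A, μ (u ++ v) = μ u * μ v)
    (lam ν : Fin n → ℕ) (hs : ∀ w : List A, s w = lam ⬝ᵥ (μ w *ᵥ ν))
    (X : Set ℕ) (N p : ℕ) (hp : 0 < p)
    (hX : ∀ m ≥ N, (m ∈ X ↔ m + p ∈ X)) :
    Language.IsRegular {w : List A | s w ∈ X} :=
  preimage_of_recognizable_set_regular_general s n μ hμm lam ν hs X N p hp hX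
end

section
/- Every recognizable (eventually periodic) set of natural numbers is L-recognizable in any rational abstract numeration system: if L ⊆ A* is an infinite regular language and X ⊆ ℕ is eventually periodic, then the set rep_L(X) = {w ∈ L : val_L(w) ∈ X} is a regular language. -/
open Function

theorem List.ncard_setOf_length_succ {A : Type*} [Fintype A] (P : List A → Prop) (n : ℕ) :
    {w : List A | w.length = n + 1 ∧ P w}.ncard
      = ∑ a : A, {w : List A | w.length = n ∧ P (a :: w)}.ncard := by
  have hunion : {w : List A | w.length = n + 1 ∧ P w}
      = ⋃ a : A, (a :: ·) '' {w : List A | w.length = n ∧ P (a :: w)} := by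
    ext (_ | ⟨a, w⟩) <;> simp
  rw [hunion, Set.ncard_iUnion_of_finite, finsum_eq_sum_of_fintype]
  · simp only [Set.ncard_image_of_injective _ List.cons_injective]
  · exact fun a => ((List.finite_length_eq A n).subset fun _ h => h.1).image _
  · intro a b hab
    refine Set.disjoint_left.2 ?_
    rintro _ ⟨v, -, rfl⟩ ⟨w, -, h⟩
    exact hab (List.cons.inj h).1.symm

theorem exists_eventually_periodic_of_finite {V : Type*} [Finite V] (g : ℕ → V)
    (hg : ∀ m n, g m = g n → g (m + 1) = g (n + 1)) :
    ∃ s t, 0 < t ∧ Periodic (fun n => g (s + n)) t := by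
  obtain ⟨i, j, hne, heq⟩ := Finite.exists_ne_map_eq_of_infinite g
  wlog hij : i < j generalizing i j
  · exact this j i hne.symm heq.symm (hne.lt_or_gt.resolve_left hij)
  have hshift (k : ℕ) : g (i + k) = g (j + k) := by
    induction k with
    | zero => exact heq
    | succ k ih => exact hg _ _ ih
  refine ⟨i, j - i, Nat.sub_pos_of_lt hij, fun n => ?_⟩
  change g (i + (n + (j - i))) = g (i + n)
  rw [show i + (n + (j - i)) = j + n by omega]
  exact (hshift n).symm

theorem finite_setOf_periodic_add {V : Type*} [Finite V] (s : ℕ) {t : ℕ} (ht : 0 < t) :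
    {f : ℕ → V | Periodic (fun n => f (s + n)) t}.Finite := by
  refine Set.Finite.of_finite_image (f := fun f (i : Fin (s + t)) => f i) (Set.toFinite _) ?_
  intro f hf g hg hfg
  funext n
  induction n using Nat.strong_induction_on with
  | _ n ih =>
    by_cases hn : n < s + t
    · exact congrFun hfg ⟨n, hn⟩
    · obtain ⟨k, rfl⟩ : ∃ k, n = s + (k + t) := ⟨n - s - t, by omega⟩
      calc f (s + (k + t)) = f (s + k) := hf k
        _ = g (s + k) := ih _ (by omega)
        _ = g (s + (k + t)) := (hg k).symm

theorem periodic_const_add_shift {V : Type*} {f : ℕ → V} {s t : ℕ}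
    (h : Periodic (fun n => f (s + n)) t) (k : ℕ) : Periodic (fun n => f (k + (s + n))) t := by
  simpa only [add_left_comm] using h.const_add k

theorem mem_iff_of_modEq {X : Set ℕ} {N p m m' : ℕ} (hX : ∀ m ≥ N, (m ∈ X ↔ m + p ∈ X))
    (hm : N ≤ m) (hm' : N ≤ m') (h : m ≡ m' [MOD p]) : m ∈ X ↔ m' ∈ X := by
  have hper : Periodic (fun n => N + n ∈ X) p := fun n => by
    show (N + (n + p) ∈ X) = (N + n ∈ X)
    rw [← add_assoc]
    exact propext (hX _ (Nat.le_add_right N n)).symm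
  obtain ⟨a, rfl⟩ := Nat.exists_eq_add_of_le hm
  obtain ⟨b, rfl⟩ := Nat.exists_eq_add_of_le hm'
  have hab : a % p = b % p := Nat.ModEq.add_left_cancel' N h
  refine Iff.of_eq ?_
  calc (N + a ∈ X) = (N + a % p ∈ X) := (hper.map_mod_nat a).symm
    _ = (N + b % p ∈ X) := by rw [hab]
    _ = (N + b ∈ X) := hper.map_mod_nat b

namespace Language

variable {A : Type*}

noncomputable def lengthCount (L : Language A) (n : ℕ) : ℕ :=
  {w | w.length = n ∧ w ∈ L}.ncard

noncomputable def shortCount (L : Language A) (n : ℕ) : ℕ :=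
  {w | w.length < n ∧ w ∈ L}.ncard

noncomputable def lexCount [LT A] (L : Language A) (w : List A) : ℕ :=
  {v | v.length = w.length ∧ v ∈ L ∧ List.Lex (· < ·) v w}.ncard

theorem lengthCount_succ [Fintype A] (L : Language A) (n : ℕ) :
    lengthCount L (n + 1) = ∑ a : A, lengthCount (L.leftQuotient [a]) n :=
  List.ncard_setOf_length_succ (· ∈ L) n

theorem shortCount_succ [Finite A] (L : Language A) (n : ℕ) :
    shortCount L (n + 1) = shortCount L n + lengthCount L n := by
  have hunion : {w | w.length < n + 1 ∧ w ∈ L}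
      = {w | w.length < n ∧ w ∈ L} ∪ {w | w.length = n ∧ w ∈ L} := by
    ext w
    simp [le_iff_lt_or_eq, or_and_right]
  rw [shortCount, hunion, Set.ncard_union_eq (Set.disjoint_left.2 fun _ h1 h2 => h1.1.ne h2.1)
    ((List.finite_length_lt A n).subset fun _ h => h.1)
    ((List.finite_length_eq A n).subset fun _ h => h.1)]
  rfl

theorem shortCount_mono [Finite A] (L : Language A) : Monotone (shortCount L) :=
  fun _ n hmn => Set.ncard_le_ncard (fun _ h => ⟨h.1.trans_le hmn, h.2⟩)
    ((List.finite_length_lt A n).subset fun _ h => h.1)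

theorem exists_le_shortCount [Finite A] {L : Language A} (hL : (L : Set (List A)).Infinite)
    (N : ℕ) : ∃ n, N ≤ shortCount L n := by
  obtain ⟨T, hTL, rfl⟩ := hL.exists_subset_card_eq N
  refine ⟨T.sup List.length + 1, ?_⟩
  rw [← Set.ncard_coe_finset]
  exact Set.ncard_le_ncard (fun w hw => ⟨Nat.lt_succ_of_le (Finset.le_sup hw), hTL hw⟩)
    ((List.finite_length_lt A _).subset fun _ h => h.1)

section LinearOrder

variable [Fintype A] [LinearOrder A]

theorem lexCount_cons (L : Language A) (a : A) (w : List A) :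
    lexCount L (a :: w) =
      ∑ b ∈ Finset.univ.filter (· < a), lengthCount (L.leftQuotient [b]) w.length
        + lexCount (L.leftQuotient [a]) w := by
  rw [lexCount, List.length_cons, List.ncard_setOf_length_succ,
    ← Finset.sum_filter_add_sum_filter_not Finset.univ (· < a)]
  congr 1
  · refine Finset.sum_congr rfl fun b hb => congrArg Set.ncard (Set.ext fun v => ?_)
    simp [List.cons_lex_cons_iff, (Finset.mem_filter.1 hb).2]
  · rw [Finset.sum_eq_single_of_mem a (by simp)]
    · congr 1
      ext v
      simp [List.cons_lex_cons_iff]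
    · intro b hb hba
      simp [List.cons_lex_cons_iff, hba, (Finset.mem_filter.1 hb).2]

/-- `branchCount L u j` counts the words of `L` of length `u.length + j` that are
lexicographically smaller than `u ++ z`, for any `z` of length `j`, at a position within `u`. -/
noncomputable def branchCount : Language A → List A → ℕ → ℕ
  | _, [], _ => 0
  | L, a :: u, j =>
    ∑ b ∈ Finset.univ.filter (· < a), lengthCount (L.leftQuotient [b]) (u.length + j)
      + branchCount (L.leftQuotient [a]) u j

theorem lexCount_append (L : Language A) (u w : List A) :
    lexCount L (u ++ w) = branchCount L u w.length + lexCount (L.leftQuotient u) w := by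
  induction u generalizing L with
  | nil => simp [branchCount, leftQuotient_nil]
  | cons a u ih =>
    rw [List.cons_append, lexCount_cons, ih, branchCount, ← leftQuotient_append,
      List.length_append, add_assoc]
    rfl

theorem ansVal_eq_shortCount_add_lexCount (L : Language A) (w : List A) :
    ansVal L w = shortCount L w.length + lexCount L w := by
  have hunion : ansVal L w = ({v | v.length < w.length ∧ v ∈ L}
      ∪ {v | v.length = w.length ∧ v ∈ L ∧ List.Lex (· < ·) v w}).ncard := by
    refine congrArg Set.ncard (Set.ext fun v => ?_)
    change v ∈ L ∧ radixLt v w ↔ _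
    simp only [radixLt, Set.mem_union, Set.mem_ofPred_eq]
    tauto
  rw [hunion, Set.ncard_union_eq (Set.disjoint_left.2 fun _ h1 h2 => h1.1.ne h2.1)
    ((List.finite_length_lt A _).subset fun _ h => h.1)
    ((List.finite_length_eq A _).subset fun _ h => h.1)]
  rfl

/-- The part of `ansVal L (u ++ z)` that depends on `z` only through its length `j`. -/
noncomputable def prefixVal (L : Language A) (u : List A) (j : ℕ) : ℕ :=
  shortCount L (u.length + j) + branchCount L u j

theorem ansVal_append (L : Language A) (u w : List A) :
    ansVal L (u ++ w) = prefixVal L u w.length + lexCount (L.leftQuotient u) w := by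
  rw [ansVal_eq_shortCount_add_lexCount, lexCount_append, prefixVal, List.length_append, add_assoc]

theorem shortCount_length_le_ansVal (L : Language A) (w : List A) :
    shortCount L w.length ≤ ansVal L w :=
  (ansVal_eq_shortCount_add_lexCount L w).symm ▸ Nat.le_add_right _ _

theorem periodic_branchCount {p s t : ℕ} {L : Language A}
    (hlen : ∀ x, Periodic (fun n => (lengthCount (L.leftQuotient x) (s + n) : ZMod p)) t)
    (u : List A) : Periodic (fun n => (branchCount L u (s + n) : ZMod p)) t := by
  induction u generalizing L with
  | nil => simp [branchCount, Periodic]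
  | cons a u ih =>
    have hrest := ih (L := L.leftQuotient [a]) fun x => by
      rw [← leftQuotient_append]
      exact hlen ([a] ++ x)
    intro n
    simp only [branchCount, Nat.cast_add, Nat.cast_sum]
    refine congrArg₂ (· + ·) (Finset.sum_congr rfl fun b _ => ?_) (hrest n)
    exact periodic_const_add_shift (f := fun m => (lengthCount _ m : ZMod p)) (hlen [b])
      u.length n

theorem periodic_prefixVal {p s t : ℕ} {L : Language A}
    (hshort : Periodic (fun n => (shortCount L (s + n) : ZMod p)) t)
    (hlen : ∀ x, Periodic (fun n => (lengthCount (L.leftQuotient x) (s + n) : ZMod p)) t)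
    (u : List A) : Periodic (fun n => (prefixVal L u (s + n) : ZMod p)) t := fun n => by
  simp only [prefixVal, Nat.cast_add]
  exact congrArg₂ (· + ·)
    (periodic_const_add_shift (f := fun m => (shortCount L m : ZMod p)) hshort u.length n)
    (periodic_branchCount hlen u n)

theorem leftQuotient_eq_of_prefixVal_modEq {L : Language A} {X : Set ℕ} {N p : ℕ}
    (hX : ∀ m ≥ N, (m ∈ X ↔ m + p ∈ X)) {u v : List A}
    (hquot : L.leftQuotient u = L.leftQuotient v)
    (hpre : ∀ j, (prefixVal L u j : ZMod p) = prefixVal L v j)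
    (hu : N ≤ shortCount L u.length) (hv : N ≤ shortCount L v.length) :
    leftQuotient {w | w ∈ L ∧ ansVal L w ∈ X} u
      = leftQuotient {w | w ∈ L ∧ ansVal L w ∈ X} v := by
  have hlarge : ∀ x w, N ≤ shortCount L x.length → N ≤ ansVal L (x ++ w) := fun x w hx =>
    hx.trans ((shortCount_mono L (by simp)).trans (shortCount_length_le_ansVal L _))
  ext w
  have hmem : u ++ w ∈ L ↔ v ++ w ∈ L := by rw [← mem_leftQuotient, hquot, mem_leftQuotient]
  have hval : ansVal L (u ++ w) ≡ ansVal L (v ++ w) [MOD p] := by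
    rw [← ZMod.natCast_eq_natCast_iff, ansVal_append, ansVal_append, hquot, Nat.cast_add,
      Nat.cast_add, hpre]
  change u ++ w ∈ L ∧ _ ↔ v ++ w ∈ L ∧ _
  rw [hmem, mem_iff_of_modEq hX (hlarge u w hu) (hlarge v w hv) hval]

end LinearOrder

theorem IsRegular.exists_periodic_counts [Fintype A] {L : Language A} (hL : L.IsRegular)
    (p : ℕ) [NeZero p] :
    ∃ s t, 0 < t ∧ Periodic (fun n => (shortCount L (s + n) : ZMod p)) t ∧
      ∀ x, Periodic (fun n => (lengthCount (L.leftQuotient x) (s + n) : ZMod p)) t := by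
  have : Finite (Set.range L.leftQuotient) := hL.finite_range_leftQuotient.to_subtype
  let g (n : ℕ) : (Set.range L.leftQuotient → ZMod p) × ZMod p :=
    (fun K => (lengthCount K.1 n : ZMod p), (shortCount L n : ZMod p))
  have hquot (K : Set.range L.leftQuotient) (a : A) :
      K.1.leftQuotient [a] ∈ Set.range L.leftQuotient := by
    obtain ⟨_, x, rfl⟩ := K
    exact ⟨x ++ [a], leftQuotient_append L x [a]⟩
  have hstep : ∀ m n, g m = g n → g (m + 1) = g (n + 1) := by
    intro m n hmn
    simp only [g, Prod.mk.injEq, funext_iff] at hmn ⊢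
    refine ⟨fun K => ?_, ?_⟩
    · simp only [lengthCount_succ, Nat.cast_sum]
      exact Finset.sum_congr rfl fun a _ => hmn.1 ⟨_, hquot K a⟩
    · simp only [shortCount_succ, Nat.cast_add]
      rw [hmn.2, hmn.1 ⟨L, [], rfl⟩]
  obtain ⟨s, t, ht, hper⟩ := exists_eventually_periodic_of_finite g hstep
  exact ⟨s, t, ht, fun n => congrArg Prod.snd (hper n),
    fun x n => congrFun (congrArg Prod.fst (hper n)) ⟨_, x, rfl⟩⟩

theorem IsRegular.of_factorsThrough_leftQuotient {S : Type*} {L : Language A} (ι : List A → S)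
    (hι : (Set.range ι).Finite) (h : FactorsThrough L.leftQuotient ι) : L.IsRegular := by
  refine IsRegular.of_finite_range_leftQuotient ?_
  have hfac : L.leftQuotient = extend ι L.leftQuotient ⊥ ∘ ι :=
    funext fun u => (h.extend_apply _ u).symm
  rw [hfac, Set.range_comp]
  exact hι.image _

end Language

open Language

/-- Every recognizable (eventually periodic) set of natural numbers is
`L`-recognizable in any rational abstract numeration system. -/
theorem recognizable_set_is_L_recognizable {A : Type*} [Fintype A] [LinearOrder A]
    (L : Language A) (hreg : L.IsRegular) (hinf : (L : Set (List A)).Infinite)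
    (X : Set ℕ) (N p : ℕ) (hp : 0 < p)
    (hX : ∀ m ≥ N, (m ∈ X ↔ m + p ∈ X)) :
    Language.IsRegular {w : List A | w ∈ L ∧ ansVal L w ∈ X} := by
  have : NeZero p := ⟨hp.ne'⟩
  obtain ⟨s, t, ht, hshort, hlen⟩ := hreg.exists_periodic_counts p
  obtain ⟨n₀, hn₀⟩ := exists_le_shortCount hinf N
  have hlong {u : List A} (hu : ¬ u.length < n₀) : N ≤ shortCount L u.length :=
    hn₀.trans (shortCount_mono L (not_lt.1 hu))
  refine IsRegular.of_factorsThrough_leftQuotient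
    (fun u => (L.leftQuotient u, fun j => (prefixVal L u j : ZMod p),
      if u.length < n₀ then some u else none)) ?_ ?_
  · refine (hreg.finite_range_leftQuotient.prod ((finite_setOf_periodic_add s ht).prod
      (((List.finite_length_lt A n₀).image some).insert none))).subset ?_
    rintro _ ⟨u, rfl⟩
    refine ⟨⟨u, rfl⟩, periodic_prefixVal hshort hlen u, ?_⟩
    dsimp only
    split_ifs with hu
    · exact Or.inr ⟨u, hu, rfl⟩
    · exact Or.inl rfl
  · intro u v huv
    simp only [Prod.mk.injEq] at huv
    obtain ⟨hquot, hpre, hcut⟩ := huv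
    split_ifs at hcut with hu hv hv
    · rw [Option.some_inj.1 hcut]
    · exact leftQuotient_eq_of_prefixVal_modEq hX hquot (congrFun hpre) (hlong hu) (hlong hv)
end
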